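/- arXiv:1310.8035 — 5 statements merged into one kernel-verified Lean document; each statement's English description precedes it below -/
import Mathlib

section
/- Let f : ℝ → ℝ be a differentiable function satisfying f'(t) = (1/m) f(t)² + a for all t, where m > 0 and a is a constant. If f is bounded, then a ≤ 0 and f is constant equal to √(-ma) or -√(-ma), or f is strictly monotone. -/
/-!
Since `f' = f² / m + a ≥ a`, a bounded `f` forces `a ≤ 0`. If `f'` vanishes somewhere, `f` passes
through an equilibrium `±√(-ma)` of the locally Lipschitz autonomous equation `y' = y² / m + a`,
and uniqueness of solutions makes it constant. Otherwise `f'` has constant sign by Darboux's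
theorem, so `f` is strictly monotone.
-/

open Set Filter Bornology

theorem nonpos_of_le_deriv_of_bddAbove_range {f : ℝ → ℝ} (hf : Differentiable ℝ f)
    (hbdd : BddAbove (range f)) {C : ℝ} (hC : ∀ x, C ≤ deriv f x) : C ≤ 0 := by
  by_contra! hpos
  have hlinear : Tendsto (fun y => f 0 + C * y) atTop atTop :=
    tendsto_atTop_add_const_left _ _ (tendsto_id.const_mul_atTop hpos)
  have hf_top : Tendsto f atTop atTop := by
    refine tendsto_atTop_mono' _ ?_ hlinear
    filter_upwards [eventually_ge_atTop 0] with y hy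
    have hmvt := mul_sub_le_image_sub_of_le_deriv hf hC hy
    rw [sub_zero] at hmvt
    linarith
  exact not_bddAbove_of_tendsto_atTop hf_top hbdd

theorem strictMono_or_strictAnti_of_deriv_ne_zero {f : ℝ → ℝ} (hf : Differentiable ℝ f)
    (hf' : ∀ x, deriv f x ≠ 0) : StrictMono f ∨ StrictAnti f := by
  rcases hasDerivWithinAt_forall_lt_or_forall_gt_of_forall_ne convex_univ
      (fun x _ => (hf x).hasDerivAt.hasDerivWithinAt) (fun x _ => hf' x) with hneg | hpos
  · exact .inr (strictAnti_of_deriv_neg fun x => hneg x trivial)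
  · exact .inl (strictMono_of_deriv_pos fun x => hpos x trivial)

theorem ODE_solution_eq_const_of_equilibrium {E : Type*} [NormedAddCommGroup E]
    [NormedSpace ℝ E] [ProperSpace E] {v : E → E} (hv : LocallyLipschitz v) {f : ℝ → E}
    (hf : ∀ t, HasDerivAt f (v (f t)) t) (hbdd : IsBounded (range f)) {t₀ : ℝ}
    (ht₀ : v (f t₀) = 0) : f = fun _ => f t₀ := by
  obtain ⟨R, hR⟩ := hbdd.subset_closedBall 0
  obtain ⟨K, hK⟩ :=
    hv.locallyLipschitzOn.exists_lipschitzOnWith_of_compact (isCompact_closedBall (0 : E) R)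
  exact ODE_solution_unique_univ (fun _ => hK) (fun t => ⟨hf t, hR (mem_range_self t)⟩)
    (fun _ => ⟨ht₀ ▸ hasDerivAt_const _ _, hR (mem_range_self t₀)⟩) rfl

/-- If `f : ℝ → ℝ` is differentiable with `f' t = (1/m) f t ^ 2 + a` (`m > 0`) and `f` is
bounded, then `a ≤ 0` and `f` is constantly `√(-m*a)` or `-√(-m*a)`, or `f` is strictly
monotone. -/
theorem stmt1 (f : ℝ → ℝ) (hf : Differentiable ℝ f) (m a : ℝ) (hm : 0 < m)
    (hode : ∀ t : ℝ, deriv f t = (1 / m) * (f t) ^ 2 + a)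
    (hbdd : ∃ C : ℝ, ∀ t : ℝ, |f t| ≤ C) :
    a ≤ 0 ∧
      ((∀ t, f t = Real.sqrt (-(m * a))) ∨ (∀ t, f t = -Real.sqrt (-(m * a))) ∨
        StrictMono f ∨ StrictAnti f) := by
  have hbounded : IsBounded (range f) := by
    obtain ⟨C, hC⟩ := hbdd
    exact isBounded_iff_forall_norm_le.2 ⟨C, by simpa using hC⟩
  have ha : a ≤ 0 := nonpos_of_le_deriv_of_bddAbove_range hf hbounded.bddAbove fun t => by
    rw [hode]
    exact le_add_of_nonneg_left (by positivity)
  refine ⟨ha, ?_⟩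
  by_cases hcrit : ∃ t₀, deriv f t₀ = 0
  · obtain ⟨t₀, ht₀⟩ := hcrit
    have hriccati : LocallyLipschitz fun x : ℝ => 1 / m * x ^ 2 + a :=
      ContDiff.locallyLipschitz (by fun_prop)
    have hconst := ODE_solution_eq_const_of_equilibrium hriccati
      (fun t => hode t ▸ (hf t).hasDerivAt) hbounded (ht₀ ▸ (hode t₀).symm)
    have hsq : f t₀ ^ 2 = -(m * a) := by
      rw [hode] at ht₀
      field_simp at ht₀
      linarith
    have hsqrt : Real.sqrt (-(m * a)) = |f t₀| := by rw [← hsq, Real.sqrt_sq_eq_abs]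
    rcases abs_choice (f t₀) with h | h
    · exact .inl fun t => by rw [hconst, hsqrt, h]
    · exact .inr (.inl fun t => by rw [hconst, hsqrt, h, neg_neg])
  · exact .inr (.inr (strictMono_or_strictAnti_of_deriv_ne_zero hf (not_exists.mp hcrit)))
end

section
/- For every integer k ≥ 4, with c₁ = k/(2(k-1)), s₁ = k²-1, n = k(k-1), we have (n+2)c₁/((2s₁+n+2)(1-c₁)) = (k²-k+2)/(3k²-7k+2) < 1, and equality holds when k = 3. -/
/-- For `k ≥ 4`, with `c₁ = k/(2(k-1))`, `s₁ = k²-1`, `n = k(k-1)`,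
`(n+2)c₁/((2s₁+n+2)(1-c₁)) = (k²-k+2)/(3k²-7k+2) < 1`, with equality `= 1` when `k = 3`. -/
theorem stmt6 :
    (∀ k : ℕ, 4 ≤ k →
      ((k : ℝ) * (k - 1) + 2) * (k / (2 * (k - 1))) /
          ((2 * ((k : ℝ) ^ 2 - 1) + k * (k - 1) + 2) * (1 - k / (2 * (k - 1))))
        = ((k : ℝ) ^ 2 - k + 2) / (3 * k ^ 2 - 7 * k + 2) ∧
      ((k : ℝ) ^ 2 - k + 2) / (3 * k ^ 2 - 7 * k + 2) < 1) ∧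
    ((3 : ℝ) * (3 - 1) + 2) * (3 / (2 * (3 - 1))) /
        ((2 * ((3 : ℝ) ^ 2 - 1) + 3 * (3 - 1) + 2) * (1 - 3 / (2 * (3 - 1)))) = 1 := by
  constructor
  · intro k hk
    have hk4 : (4 : ℝ) ≤ (k : ℝ) := by exact_mod_cast hk
    have h1 : (k : ℝ) - 1 ≠ 0 := by nlinarith
    have h2 : 2 * ((k : ℝ) ^ 2 - 1) + k * (k - 1) + 2 ≠ 0 := by nlinarith
    have h3 : 1 - (k : ℝ) / (2 * (k - 1)) ≠ 0 := by
      rw [sub_ne_zero]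
      intro h
      have : (k : ℝ) = 2 * (k - 1) := by
        field_simp at h
        linarith [h]
      nlinarith
    have h4 : (3 : ℝ) * k ^ 2 - 7 * k + 2 > 0 := by nlinarith
    have h4' : (3 : ℝ) * k ^ 2 - 7 * k + 2 ≠ 0 := ne_of_gt h4
    have h5 : (k : ℝ) ≠ 0 := by nlinarith
    have h6 : (k : ℝ) * 2 - k ^ 2 * 7 + k ^ 3 * 3 ≠ 0 := by nlinarith
    constructor
    · have hden : (2 * ((k : ℝ) ^ 2 - 1) + k * (k - 1) + 2) * (1 - k / (2 * (k - 1))) ≠ 0 :=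
        mul_ne_zero h2 h3
      rw [div_eq_div_iff hden h4']
      field_simp
      ring
    · rw [div_lt_one h4]
      nlinarith
  · norm_num
end

section
/- Let l₁, l₂ ≥ 2 be integers. The quadratic equation (l₁³+l₁²l₂+l₁l₂²-l₁) x² - 2l₁l₂(l₁+l₂) x + (l₁l₂+1)l₂ = 0 has two distinct positive real roots x₁ < x₂, and for every x with x₁ < x < x₂ the quadratic is strictly negative. -/
/-- For `l₁, l₂ ≥ 2`, the quadratic
`(l₁³+l₁²l₂+l₁l₂²-l₁) x² - 2l₁l₂(l₁+l₂) x + (l₁l₂+1)l₂` has two distinct positive real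
roots `x₁ < x₂`, and it is strictly negative on `(x₁, x₂)`. -/
theorem stmt13 (l₁ l₂ : ℕ) (h₁ : 2 ≤ l₁) (h₂ : 2 ≤ l₂) :
    ∃ x₁ x₂ : ℝ, 0 < x₁ ∧ x₁ < x₂ ∧
      ((l₁ : ℝ) ^ 3 + l₁ ^ 2 * l₂ + l₁ * l₂ ^ 2 - l₁) * x₁ ^ 2
          - 2 * l₁ * l₂ * (l₁ + l₂) * x₁ + (l₁ * l₂ + 1) * l₂ = 0 ∧
      ((l₁ : ℝ) ^ 3 + l₁ ^ 2 * l₂ + l₁ * l₂ ^ 2 - l₁) * x₂ ^ 2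
          - 2 * l₁ * l₂ * (l₁ + l₂) * x₂ + (l₁ * l₂ + 1) * l₂ = 0 ∧
      ∀ x : ℝ, x₁ < x → x < x₂ →
        ((l₁ : ℝ) ^ 3 + l₁ ^ 2 * l₂ + l₁ * l₂ ^ 2 - l₁) * x ^ 2
          - 2 * l₁ * l₂ * (l₁ + l₂) * x + (l₁ * l₂ + 1) * l₂ < 0 := by
  have hL₁ : (2 : ℝ) ≤ (l₁ : ℝ) := by exact_mod_cast h₁
  have hL₂ : (2 : ℝ) ≤ (l₂ : ℝ) := by exact_mod_cast h₂
  set L₁ : ℝ := (l₁ : ℝ)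
  set L₂ : ℝ := (l₂ : ℝ)
  set a : ℝ := L₁ ^ 3 + L₁ ^ 2 * L₂ + L₁ * L₂ ^ 2 - L₁ with ha_def
  set b : ℝ := L₁ * L₂ * (L₁ + L₂) with hb_def
  set c : ℝ := (L₁ * L₂ + 1) * L₂ with hc_def
  set d : ℝ := L₁ * L₂ * (L₁ ^ 2 - 1) * (L₂ ^ 2 - 1) with hd_def
  have ha : 0 < a := by rw [ha_def]; nlinarith
  have hc : 0 < c := by rw [hc_def]; nlinarith
  have hd : 0 < d := by
    rw [hd_def]
    have e1 : (0:ℝ) < L₁ * L₂ := by nlinarith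
    have e2 : (0:ℝ) < L₁ ^ 2 - 1 := by nlinarith
    have e3 : (0:ℝ) < L₂ ^ 2 - 1 := by nlinarith
    exact mul_pos (mul_pos e1 e2) e3
  have hb : 0 < b := by rw [hb_def]; nlinarith
  have hid : b ^ 2 - a * c = d := by rw [hb_def, ha_def, hc_def, hd_def]; ring
  set s : ℝ := Real.sqrt d with hs_def
  have hs2 : s ^ 2 = d := Real.sq_sqrt hd.le
  have hs0 : 0 < s := Real.sqrt_pos.mpr hd
  have hsb : s < b := by nlinarith [mul_pos ha hc]
  have hane : a ≠ 0 := ne_of_gt ha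
  have hx1 : a * ((b - s) / a) = b - s := mul_div_cancel₀ _ hane
  have hx2 : a * ((b + s) / a) = b + s := mul_div_cancel₀ _ hane
  refine ⟨(b - s) / a, (b + s) / a, div_pos (by linarith) ha, ?_, ?_, ?_, ?_⟩
  · rw [div_lt_div_iff_of_pos_right ha]; linarith
  · have h0 : a * (a * ((b - s) / a) ^ 2 - 2 * L₁ * L₂ * (L₁ + L₂) * ((b - s) / a) + c)
        = (a * ((b - s) / a)) ^ 2 - 2 * b * (a * ((b - s) / a)) + a * c := by
      rw [hb_def]; ring
    have h1 : a * (a * ((b - s) / a) ^ 2 - 2 * L₁ * L₂ * (L₁ + L₂) * ((b - s) / a) + c) = 0 := by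
      rw [h0, hx1]; linear_combination hs2 - hid
    exact (mul_eq_zero.mp h1).resolve_left hane
  · have h0 : a * (a * ((b + s) / a) ^ 2 - 2 * L₁ * L₂ * (L₁ + L₂) * ((b + s) / a) + c)
        = (a * ((b + s) / a)) ^ 2 - 2 * b * (a * ((b + s) / a)) + a * c := by
      rw [hb_def]; ring
    have h1 : a * (a * ((b + s) / a) ^ 2 - 2 * L₁ * L₂ * (L₁ + L₂) * ((b + s) / a) + c) = 0 := by
      rw [h0, hx2]; linear_combination hs2 - hid
    exact (mul_eq_zero.mp h1).resolve_left hane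
  · intro x hlo hhi
    rw [div_lt_iff₀ ha] at hlo
    rw [lt_div_iff₀ ha] at hhi
    have heq : (a * x ^ 2 - 2 * L₁ * L₂ * (L₁ + L₂) * x + c) * a
        = (x * a - (b - s)) * (x * a - (b + s)) := by
      linear_combination (2 * a * x) * hb_def + hs2 - hid
    have hneg : (x * a - (b - s)) * (x * a - (b + s)) < 0 :=
      mul_neg_of_pos_of_neg (by linarith) (by linarith)
    nlinarith [heq, hneg]
end

section
/- The system of equations a₀ + ((d₂+8)/(d₂+16))p = 1, a₀ = -(d₂(d₂+2)/(16d₁))a₁ + (d₂(d₂+2) - 2d₁(d₂+8))/(16 a₁ d₁) + (d₂+16)/8, 6a₀ - (d₂+2)a₁ + d₂ - 4 = 0 with (d₁, d₂) = (3, 8) has exactly two real solutions with a₁ ≠ 0: (a₀, a₁, p) = (1, 1, 0) and (a₀, a₁, p) = (-1/2, 1/10, 9/4). -/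
/-- The m-quasi-Einstein system for G₂ with (d₁, d₂) = (3, 8) has exactly the two
solutions (a₀, a₁, p) = (1, 1, 0) and (a₀, a₁, p) = (-1 / 2, 1 / 10, 9 / 4) with a₁ ≠ 0. -/
theorem stmt17 (a₀ a₁ p : ℝ) (ha₁ : a₁ ≠ 0) :
    (a₀ + (((8 : ℝ) + 8) / (8 + 16)) * p = 1 ∧
      a₀ = -(((8 : ℝ) * (8 + 2)) / (16 * 3)) * a₁
            + ((8 : ℝ) * (8 + 2) - 2 * 3 * (8 + 8)) / (16 * a₁ * 3)
            + ((8 : ℝ) + 16) / 8 ∧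
      6 * a₀ - ((8 : ℝ) + 2) * a₁ + 8 - 4 = 0) ↔
      ((a₀, a₁, p) = (1, 1, 0) ∨ (a₀, a₁, p) = (-1 / 2, 1 / 10, 9 / 4)) := by
  constructor
  · rintro ⟨h1, h2, h3⟩
    field_simp at h2
    have ha0 : a₀ = (5*a₁-2)/3 := by linarith
    rw [ha0] at h2
    have key : (a₁ - 1) * (a₁ - 1/10) = 0 := by nlinarith [h2]
    rcases mul_eq_zero.mp key with h | h
    · left
      have ha : a₁ = 1 := by linarith
      have h0 : a₀ = 1 := by rw [ha] at h3; linarith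
      have hp : p = 0 := by rw [h0] at h1; linarith
      simp [ha, h0, hp]
    · right
      have ha : a₁ = 1/10 := by linarith
      have h0 : a₀ = -1/2 := by rw [ha] at h3; linarith
      have hp : p = 9/4 := by rw [h0] at h1; linarith
      simp [ha, h0, hp]
  · rintro (h | h) <;> simp_all [Prod.ext_iff] <;> norm_num
end

section
/- The system of equations a₀ + ((d₂+8)/(d₂+16))p = 1, a₀ = -(d₂(d₂+2)/(16d₁))a₁ + (d₂(d₂+2) - 2d₁(d₂+8))/(16 a₁ d₁) + (d₂+16)/8, 6a₀ - (d₂+2)a₁ + d₂ - 4 = 0 with (d₁, d₂) = (21, 28) has exactly two real solutions with a₁ ≠ 0: (a₀, a₁, p) = (1, 1, 0) and (a₀, a₁, p) = (-8/3, 4/15, 121/27). -/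
/-! Equation three expresses `a₀` linearly in `a₁`; substituting into equation two and clearing
the denominator `16 a₁ d₁` leaves a quadratic in `a₁` which, for every `(d₁, d₂)`, has the root
`a₁ = 1` of the Einstein metric. For `(d₁, d₂) = (21, 28)` the other root is `a₁ = 4 / 15`, and
equation one then determines `p`. -/

/-- The system of the statement for general `d₁ = dim 𝔨₁`, `d₂ = dim 𝔭₁`. -/
def QuasiEinsteinSystem (d₁ d₂ a₀ a₁ p : ℝ) : Prop :=
  a₀ + (d₂ + 8) / (d₂ + 16) * p = 1 ∧
    a₀ = -(d₂ * (d₂ + 2) / (16 * d₁)) * a₁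
        + (d₂ * (d₂ + 2) - 2 * d₁ * (d₂ + 8)) / (16 * a₁ * d₁) + (d₂ + 16) / 8 ∧
    6 * a₀ - (d₂ + 2) * a₁ + d₂ - 4 = 0

namespace QuasiEinsteinSystem

variable {d₁ d₂ a₀ a₁ p : ℝ}

theorem a₀_eq (h : QuasiEinsteinSystem d₁ d₂ a₀ a₁ p) :
    a₀ = ((d₂ + 2) * a₁ - d₂ + 4) / 6 := by
  linarith [h.2.2]

theorem p_eq (h : QuasiEinsteinSystem d₁ d₂ a₀ a₁ p) (h₈ : d₂ + 8 ≠ 0) (h₁₆ : d₂ + 16 ≠ 0) :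
    p = (1 - a₀) * (d₂ + 16) / (d₂ + 8) := by
  have h₁ := h.1
  field_simp at h₁ ⊢
  linarith

theorem factorization (h : QuasiEinsteinSystem d₁ d₂ a₀ a₁ p) (hd₁ : d₁ ≠ 0) (ha₁ : a₁ ≠ 0) :
    (a₁ - 1) * ((d₂ + 2) * (8 * d₁ + 3 * d₂) * a₁ - 3 * (2 * d₁ * (d₂ + 8) - d₂ * (d₂ + 2)))
      = 0 := by
  have h₂ := h.2.1
  rw [h.a₀_eq] at h₂
  field_simp at h₂
  linear_combination h₂ / 16

theorem one_one_zero (hd₁ : d₁ ≠ 0) : QuasiEinsteinSystem d₁ d₂ 1 1 0 := by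
  refine ⟨by simp, ?_, by ring⟩
  field_simp
  ring

end QuasiEinsteinSystem

/-- The m-quasi-Einstein system for F₄ with (d₁, d₂) = (21, 28) has exactly the two
solutions (a₀, a₁, p) = (1, 1, 0) and (a₀, a₁, p) = (-8 / 3, 4 / 15, 121 / 27) with a₁ ≠ 0. -/
theorem stmt18 (a₀ a₁ p : ℝ) (ha₁ : a₁ ≠ 0) :
    (a₀ + (((28 : ℝ) + 8) / (28 + 16)) * p = 1 ∧
      a₀ = -(((28 : ℝ) * (28 + 2)) / (16 * 21)) * a₁
            + ((28 : ℝ) * (28 + 2) - 2 * 21 * (28 + 8)) / (16 * a₁ * 21)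
            + ((28 : ℝ) + 16) / 8 ∧
      6 * a₀ - ((28 : ℝ) + 2) * a₁ + 28 - 4 = 0) ↔
      ((a₀, a₁, p) = (1, 1, 0) ∨ (a₀, a₁, p) = (-8 / 3, 4 / 15, 121 / 27)) := by
  change QuasiEinsteinSystem 21 28 a₀ a₁ p ↔ _
  constructor
  · intro h
    have hp := h.p_eq (by norm_num) (by norm_num)
    have ha₀ := h.a₀_eq
    rcases mul_eq_zero.1 (h.factorization (by norm_num) ha₁) with h₁ | h₁
    · left
      rw [hp, ha₀, sub_eq_zero.1 h₁]
      norm_num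
    · right
      have : a₁ = 4 / 15 := by linarith
      rw [hp, ha₀, this]
      norm_num
  · rintro (h | h) <;> simp only [Prod.mk.injEq] at h <;> obtain ⟨rfl, rfl, rfl⟩ := h
    · exact QuasiEinsteinSystem.one_one_zero (by norm_num)
    · norm_num [QuasiEinsteinSystem]
end
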